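/- Let Ω ⊂ ℝⁿ be open, bounded, with C^{1,1} boundary, s ∈ (0,1), and β : ℝⁿ\Ω → [0,1] measurable. Then for every fixed x ∈ Ω, the function (z, y) ↦ (1−β(z)) / ( |x−z|^{n+2s} |y−z|^{n+2s} ∫_Ω |z−w|^{−(n+2s)} dw ) is integrable on (ℝⁿ\Ω) × Ω with respect to Lebesgue measure, i.e., ∫_Ω k_β(x,y) dy < ∞. -/

import Mathlib

open MeasureTheory Metric Set

/-- A bounded open set with `C^{1,1}` boundary: we encode the analytically relevant
consequence, namely the uniform interior and exterior sphere conditions. -/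
def HasC11Boundary {n : ℕ} (Ω : Set (EuclideanSpace ℝ (Fin n))) : Prop :=
  ∃ r > 0, ∀ p ∈ frontier Ω,
    (∃ x ∈ Ω, Metric.closedBall x r ⊆ closure Ω ∧ dist p x = r) ∧
    (∃ y ∈ (closure Ω)ᶜ, Metric.closedBall y r ⊆ Ωᶜ ∧ dist p y = r)

/-- The kernel k_β(x,y). -/
noncomputable def kBeta {n : ℕ} (s : ℝ) (Ω : Set (EuclideanSpace ℝ (Fin n)))
    (β : EuclideanSpace ℝ (Fin n) → ℝ) (x y : EuclideanSpace ℝ (Fin n)) : ℝ :=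
  ∫ z in Ωᶜ, (1 - β z) /
    (‖x - z‖ ^ ((n : ℝ) + 2*s) * ‖y - z‖ ^ ((n : ℝ) + 2*s) *
      ∫ w in Ω, ‖z - w‖ ^ (-((n : ℝ) + 2*s)))

/-! Integrating in `y` first, `∫_Ω |y - z|^{-(n+2s)} dy` cancels exactly against the normalising
factor in the denominator (when that integral diverges, its junk value `0` makes the integrand
vanish, matching the convention `1/∞ = 0`). By Tonelli the double integral is therefore at most
`∫_{ℝⁿ∖Ω} |x - z|^{-(n+2s)} dz`, which is finite since `x` lies at positive distance from
`ℝⁿ∖Ω` and `n + 2s > n`. -/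

theorem Real.rpow_neg_le_mul_one_add_rpow_neg {ε t r : ℝ} (hε : 0 < ε) (ht : ε ≤ t)
    (hr : 0 ≤ r) : t ^ (-r) ≤ (1 + ε⁻¹) ^ r * (1 + t) ^ (-r) := by
  have ht0 : 0 < t := hε.trans_le ht
  calc t ^ (-r) = (1 + t⁻¹) ^ r * (1 + t) ^ (-r) := by
        rw [show 1 + t⁻¹ = (1 + t) * t⁻¹ by field_simp; ring, Real.mul_rpow (by positivity)
          (by positivity), Real.inv_rpow ht0.le, Real.rpow_neg ht0.le,
          Real.rpow_neg (by positivity)]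
        field_simp
    _ ≤ (1 + ε⁻¹) ^ r * (1 + t) ^ (-r) := by gcongr

section Tail

variable {E : Type*} [NormedAddCommGroup E] [NormedSpace ℝ E] [FiniteDimensional ℝ E]
  [MeasurableSpace E] [BorelSpace E] (μ : Measure E) [μ.IsAddHaarMeasure]

theorem integrableOn_compl_ball_norm_sub_rpow_neg {r ε : ℝ} (hnr : (Module.finrank ℝ E : ℝ) < r)
    (hε : 0 < ε) (x : E) : IntegrableOn (fun z => ‖x - z‖ ^ (-r)) (ball x ε)ᶜ μ := by
  have hr : 0 ≤ r := (Nat.cast_nonneg _).trans hnr.le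
  refine ((((integrable_one_add_norm (μ := μ) hnr).comp_sub_left x).const_mul
    ((1 + ε⁻¹) ^ r)).integrableOn).mono' (by fun_prop : Measurable _).aestronglyMeasurable ?_
  filter_upwards [ae_restrict_mem measurableSet_ball.compl] with z hz
  rw [Real.norm_of_nonneg (by positivity)]
  refine Real.rpow_neg_le_mul_one_add_rpow_neg hε ?_ hr
  simpa [dist_eq_norm'] using hz

end Tail

section Normalized

variable {α β : Type*} [MeasurableSpace α] [MeasurableSpace β] {μ : Measure α} {ν : Measure β}

theorem integrable_div_integral_mul_self (c : ℝ) (f : β → ℝ) :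
    Integrable (fun y => c / (∫ w, f w ∂ν) * f y) ν := by
  by_cases hf : Integrable f ν
  · exact hf.const_mul _
  · simp [integral_undef hf]

theorem integral_div_integral_mul_self_le {c : ℝ} (hc : 0 ≤ c) (f : β → ℝ) :
    ∫ y, c / (∫ w, f w ∂ν) * f y ∂ν ≤ c := by
  rw [integral_const_mul]
  by_cases hf : ∫ w, f w ∂ν = 0
  · simpa [hf]
  · rw [div_mul_cancel₀ _ hf]

theorem integrable_prod_div_integral_mul [SFinite ν] {g : α → ℝ} {f : α × β → ℝ}
    (hg : Integrable g μ) (hg0 : 0 ≤ᵐ[μ] g) (hf : StronglyMeasurable f) (hf0 : 0 ≤ f) :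
    Integrable (fun p => g p.1 / (∫ y, f (p.1, y) ∂ν) * f p) (μ.prod ν) := by
  have hmeas : AEStronglyMeasurable (fun p => g p.1 / (∫ y, f (p.1, y) ∂ν) * f p) (μ.prod ν) :=
    (hg.aestronglyMeasurable.comp_fst.div₀
      (hf.integral_prod_right'.comp_measurable measurable_fst).aestronglyMeasurable).mul
      hf.aestronglyMeasurable
  refine (integrable_prod_iff hmeas).2
    ⟨ae_of_all _ fun a => integrable_div_integral_mul_self (g a) fun y => f (a, y),
      hg.mono' hmeas.norm.integral_prod_right' ?_⟩
  filter_upwards [hg0] with a ha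
  have hnonneg : ∀ y, 0 ≤ g a / (∫ y, f (a, y) ∂ν) * f (a, y) := fun y =>
    mul_nonneg (div_nonneg ha (integral_nonneg fun y => hf0 _)) (hf0 _)
  simp_rw [Real.norm_of_nonneg (hnonneg _)]
  rw [Real.norm_of_nonneg (integral_nonneg hnonneg)]
  exact integral_div_integral_mul_self_le ha _

end Normalized

theorem stmt16_general {n : ℕ} (Ω : Set (EuclideanSpace ℝ (Fin n)))
    (hΩo : IsOpen Ω)
    (s : ℝ) (hs : s ∈ Set.Ioo (0:ℝ) 1)
    (β : EuclideanSpace ℝ (Fin n) → ℝ) (hβm : Measurable β)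
    (hβ01 : ∀ z ∈ Ωᶜ, β z ∈ Set.Icc (0:ℝ) 1) :
    ∀ x ∈ Ω,
      MeasureTheory.IntegrableOn
        (fun p : EuclideanSpace ℝ (Fin n) × EuclideanSpace ℝ (Fin n) =>
          (1 - β p.1) /
            (‖x - p.1‖ ^ ((n : ℝ) + 2*s) * ‖p.2 - p.1‖ ^ ((n : ℝ) + 2*s) *
              ∫ w in Ω, ‖p.1 - w‖ ^ (-((n : ℝ) + 2*s))))
        (Ωᶜ ×ˢ Ω) ∧
      MeasureTheory.IntegrableOn (fun y => kBeta s Ω β x y) Ω := by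
  intro x hx
  set r : ℝ := (n : ℝ) + 2 * s
  have hnr : (Module.finrank ℝ (EuclideanSpace ℝ (Fin n)) : ℝ) < r := by
    rw [finrank_euclideanSpace_fin]; linarith [hs.1]
  obtain ⟨ε, hε, hball⟩ := isOpen_iff.1 hΩo x hx
  have hΩc_meas := hΩo.measurableSet.compl
  have hg : IntegrableOn (fun z => (1 - β z) * ‖x - z‖ ^ (-r)) Ωᶜ := by
    refine ((integrableOn_compl_ball_norm_sub_rpow_neg volume hnr hε x).mono_set
      (compl_subset_compl.2 hball)).mono' (by fun_prop : Measurable _).aestronglyMeasurable ?_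
    filter_upwards [ae_restrict_mem hΩc_meas] with z hz
    obtain ⟨hβ0, hβ1⟩ := hβ01 z hz
    rw [norm_mul, Real.norm_of_nonneg (by positivity : 0 ≤ ‖x - z‖ ^ (-r))]
    exact mul_le_of_le_one_left (by positivity) (abs_le.2 ⟨by linarith, by linarith⟩)
  have hg0 : 0 ≤ᵐ[volume.restrict Ωᶜ] fun z => (1 - β z) * ‖x - z‖ ^ (-r) := by
    filter_upwards [ae_restrict_mem hΩc_meas] with z hz
    exact mul_nonneg (sub_nonneg.2 (hβ01 z hz).2) (by positivity)
  have hF : Integrable (fun p : EuclideanSpace ℝ (Fin n) × EuclideanSpace ℝ (Fin n) =>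
      (1 - β p.1) / (‖x - p.1‖ ^ r * ‖p.2 - p.1‖ ^ r * ∫ w in Ω, ‖p.1 - w‖ ^ (-r)))
      ((volume.restrict Ωᶜ).prod (volume.restrict Ω)) := by
    refine (integrable_prod_div_integral_mul hg hg0 (f := fun p => ‖p.1 - p.2‖ ^ (-r))
      (by fun_prop : Measurable _).stronglyMeasurable fun p => by positivity).congr
      (ae_of_all _ fun p => ?_)
    dsimp only
    rw [norm_sub_rev p.1, Real.rpow_neg (norm_nonneg _), Real.rpow_neg (norm_nonneg _)]
    simp only [div_eq_mul_inv, mul_inv]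
    ring
  refine ⟨?_, hF.integral_prod_right⟩
  rw [IntegrableOn, Measure.volume_eq_prod, ← Measure.prod_restrict]
  exact hF

/-- for every fixed x ∈ Ω, the function
(z,y) ↦ (1−β(z)) / ( |x−z|^{n+2s}|y−z|^{n+2s} ∫_Ω |z−w|^{−(n+2s)} dw ) is integrable
on (ℝⁿ\Ω) × Ω; in particular ∫_Ω k_β(x,y) dy < ∞. -/
theorem stmt16 {n : ℕ} (Ω : Set (EuclideanSpace ℝ (Fin n)))
    (hΩo : IsOpen Ω) (hΩb : Bornology.IsBounded Ω) (hΩc : HasC11Boundary Ω)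
    (s : ℝ) (hs : s ∈ Set.Ioo (0:ℝ) 1)
    (β : EuclideanSpace ℝ (Fin n) → ℝ) (hβm : Measurable β)
    (hβ01 : ∀ z ∈ Ωᶜ, β z ∈ Set.Icc (0:ℝ) 1) :
    ∀ x ∈ Ω,
      MeasureTheory.IntegrableOn
        (fun p : EuclideanSpace ℝ (Fin n) × EuclideanSpace ℝ (Fin n) =>
          (1 - β p.1) /
            (‖x - p.1‖ ^ ((n : ℝ) + 2*s) * ‖p.2 - p.1‖ ^ ((n : ℝ) + 2*s) *
              ∫ w in Ω, ‖p.1 - w‖ ^ (-((n : ℝ) + 2*s))))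
        (Ωᶜ ×ˢ Ω) ∧
      MeasureTheory.IntegrableOn (fun y => kBeta s Ω β x y) Ω :=
  stmt16_general Ω hΩo s hs β hβm hβ01
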